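/- arXiv:2605.15970 — 2 statements merged into one kernel-verified Lean document; each statement's English description precedes it below -/
import Mathlib

section
/- If A is a singular copositive matrix with all nonpositive off-diagonal entries, then there exists a nonzero vector v in the kernel of A with all entries nonnegative. -/
open Matrix

def Copositive {ι : Type*} [Fintype ι] (A : Matrix ι ι ℝ) : Prop :=
  ∀ x : ι → ℝ, (∀ i, 0 ≤ x i) → 0 ≤ x ⬝ᵥ A.mulVec x

def SPN {ι : Type*} [Fintype ι] (A : Matrix ι ι ℝ) : Prop :=
  ∃ P N : Matrix ι ι ℝ, P.PosSemidef ∧ (∀ i j, 0 ≤ N i j) ∧ A = P + N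

def Mn {n : ℕ} (A : Matrix (Fin n) (Fin n) ℝ) : Prop :=
  ∀ i j k l : Fin n, i ≤ k → j ≤ l → i ≠ j → k ≠ l → A i j ≤ A k l

/-! For a Z-matrix `A` (off-diagonal entries `≤ 0`) the quadratic form only decreases when `x` is
replaced by `|x|`, since `A i j * |x i| * |x j| ≤ A i j * x i * x j` off the diagonal. Hence a
copositive symmetric Z-matrix is positive semidefinite, and for `w` in its kernel
`0 ≤ |w|ᵀ A |w| ≤ wᵀ A w = 0`; a vanishing quadratic form of a positive semidefinite matrix
forces `A |w| = 0`. -/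

lemma dotProduct_mulVec_abs_le {ι : Type*} [Fintype ι] {A : Matrix ι ι ℝ}
    (hoff : ∀ i j, i ≠ j → A i j ≤ 0) (x : ι → ℝ) :
    |x| ⬝ᵥ A *ᵥ |x| ≤ x ⬝ᵥ A *ᵥ x := by
  simp only [dotProduct, mulVec, Finset.mul_sum]
  refine Finset.sum_le_sum fun i _ => Finset.sum_le_sum fun j _ => ?_
  simp only [Pi.abs_apply]
  rcases eq_or_ne i j with rfl | hij
  · have : |x i| * |x i| = x i * x i := abs_mul_abs_self _
    linear_combination A i i * this
  · have : x i * x j ≤ |x i| * |x j| := abs_mul (x i) (x j) ▸ le_abs_self _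
    nlinarith [hoff i j hij]

lemma Copositive.posSemidef {ι : Type*} [Fintype ι] {A : Matrix ι ι ℝ} (hA : A.IsSymm)
    (hcop : Copositive A) (hoff : ∀ i j, i ≠ j → A i j ≤ 0) : A.PosSemidef :=
  .of_dotProduct_mulVec_nonneg hA fun x =>
    (hcop |x| fun i => abs_nonneg (x i)).trans (dotProduct_mulVec_abs_le hoff x)

theorem stmt_2 {n : ℕ} (A : Matrix (Fin n) (Fin n) ℝ) (hA : A.IsSymm)
    (hcop : Copositive A) (hoff : ∀ i j : Fin n, i ≠ j → A i j ≤ 0)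
    (hsing : ∃ w : Fin n → ℝ, w ≠ 0 ∧ A.mulVec w = 0) :
    ∃ v : Fin n → ℝ, v ≠ 0 ∧ A.mulVec v = 0 ∧ ∀ i, 0 ≤ v i := by
  obtain ⟨w, hw0, hwA⟩ := hsing
  have hquad : |w| ⬝ᵥ A *ᵥ |w| = 0 := by
    refine le_antisymm ?_ (hcop |w| fun i => abs_nonneg (w i))
    simpa [hwA] using dotProduct_mulVec_abs_le hoff w
  refine ⟨|w|, (Pi.abs_eq_zero w).not.mpr hw0, ?_, fun i => abs_nonneg (w i)⟩
  exact ((Copositive.posSemidef hA hcop hoff).dotProduct_mulVec_zero_iff |w|).mp hquad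
end

section
/- Let M be a symmetric n×n matrix satisfying: (I) whenever m_{ij} > 0 one has m_{ij} ≤ m_{i+1,j} and m_{ij} ≤ m_{i,j+1} (whenever defined); and (II) with k = idx(M) the first row containing a positive off-diagonal entry, m_{ij} ≤ m_{i,j+1} for all i ∈ [n−1] and all max{k, i+1} ≤ j ≤ n−1. If M is copositive then M is SPN. -/
open Matrix

open Classical in
/-- The positive index of a symmetric matrix (1-based): the first row containing a
positive off-diagonal entry, or `n + 1` if all off-diagonal entries are nonpositive. -/
noncomputable def posIdx {n : ℕ} (M : Matrix (Fin n) (Fin n) ℝ) : ℕ :=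
  if ∃ i j : Fin n, i ≠ j ∧ 0 < M i j then
    sInf {m : ℕ | ∃ i j : Fin n, (i : ℕ) + 1 = m ∧ i ≠ j ∧ 0 < M i j}
  else n + 1

/-!
Induction on `n`. If the first row has a positive off-diagonal entry, condition (I) carries it
along the first row to the last column and then down that column, so the last column is positive
off the diagonal; the hypotheses pass to the leading principal submatrix, and its SPN
decomposition extends by a nonnegative last row and column. Otherwise the first row `m` is
nonpositive off the diagonal. Subtracting the positive semidefinite matrix `m mᵀ / m₀₀` leaves a
copositive matrix with zero first row and column, and because `m` is nonpositive and, by (II),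
nondecreasing to the right, its trailing block still satisfies (I) and (II).
-/

namespace Matrix

variable {ι : Type*}

/-- The Schur complement of the pivot `A p p`, kept on all of `ι`. If `A p p = 0` the coefficient
`(A p p)⁻¹` is `0`; for the copositive matrices below the `p`-th row then vanishes anyway, so no
case split is needed. -/
noncomputable def schurComplementAt (A : Matrix ι ι ℝ) (p : ι) : Matrix ι ι ℝ :=
  A - (A p p)⁻¹ • vecMulVec (A p) (A p)

theorem schurComplementAt_apply (A : Matrix ι ι ℝ) (p i j : ι) :
    schurComplementAt A p i j = A i j - (A p p)⁻¹ * (A p i * A p j) := by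
  simp [schurComplementAt, vecMulVec_apply]

theorem schurComplementAt_apply_le {A : Matrix ι ι ℝ} {p i j : ι} (hpp : 0 ≤ A p p)
    (h : 0 ≤ A p i * A p j) : schurComplementAt A p i j ≤ A i j := by
  rw [schurComplementAt_apply]
  exact sub_le_self _ (mul_nonneg (inv_nonneg.2 hpp) h)

theorem schurComplementAt_apply_le_apply {A : Matrix ι ι ℝ} {p i j i' j' : ι} (hpp : 0 ≤ A p p)
    (hA : A i j ≤ A i' j') (h : A p i' * A p j' ≤ A p i * A p j) :
    schurComplementAt A p i j ≤ schurComplementAt A p i' j' := by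
  rw [schurComplementAt_apply, schurComplementAt_apply]
  exact sub_le_sub hA (mul_le_mul_of_nonneg_left h (inv_nonneg.2 hpp))

theorem IsSymm.schurComplementAt {A : Matrix ι ι ℝ} (hs : A.IsSymm) (p : ι) :
    (A.schurComplementAt p).IsSymm :=
  IsSymm.ext fun i j => by
    rw [schurComplementAt_apply, schurComplementAt_apply, hs.apply i j, mul_comm (A p i)]

theorem dotProduct_mulVec_schurComplementAt [Fintype ι] (A : Matrix ι ι ℝ) (p : ι) (y : ι → ℝ) :
    y ⬝ᵥ A.schurComplementAt p *ᵥ y = y ⬝ᵥ A *ᵥ y - (A p p)⁻¹ * (A p ⬝ᵥ y) ^ 2 := by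
  rw [schurComplementAt, sub_mulVec, dotProduct_sub, smul_mulVec, vecMulVec_mulVec,
    dotProduct_smul, op_smul_eq_smul, dotProduct_smul, dotProduct_comm y (A p)]
  simp only [smul_eq_mul, sq]

theorem dotProduct_mulVec_update_of_apply_eq_zero [Fintype ι] [DecidableEq ι] {C : Matrix ι ι ℝ}
    {p : ι} (hrow : ∀ j, C p j = 0) (hcol : ∀ i, C i p = 0) (x : ι → ℝ) (t : ℝ) :
    Function.update x p t ⬝ᵥ C *ᵥ Function.update x p t = x ⬝ᵥ C *ᵥ x := by
  simp only [dotProduct, mulVec, Finset.mul_sum]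
  refine Finset.sum_congr rfl fun i _ => Finset.sum_congr rfl fun j _ => ?_
  by_cases hi : i = p
  · simp [hi, hrow]
  by_cases hj : j = p
  · simp [hj, hcol]
  simp [Function.update_of_ne hi, Function.update_of_ne hj]

end Matrix

section Copositive

variable {ι : Type*} [Fintype ι] {A : Matrix ι ι ℝ}

theorem Copositive.diag_nonneg (hA : Copositive A) (i : ι) : 0 ≤ A i i := by
  classical
  simpa using hA (Pi.single i 1) fun k => by
    simp only [Pi.single_apply]; split_ifs <;> norm_num

theorem Copositive.nonneg_of_diag_eq_zero (hA : Copositive A) (hs : A.IsSymm) {i : ι}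
    (hii : A i i = 0) (j : ι) : 0 ≤ A i j := by
  classical
  by_contra! hij
  have hji : j ≠ i := by rintro rfl; linarith
  set t := (A j j + 1) / (-2 * A i j)
  have ht : 0 ≤ t := div_nonneg (by linarith [hA.diag_nonneg j]) (by linarith)
  -- `t • single i 1 + single j 1` then has quadratic form `-1`
  have hx := hA (Pi.single i t + Pi.single j 1) fun k => by
    simp only [Pi.add_apply, Pi.single_apply]; split_ifs <;> linarith
  have ht' : t * (-2 * A i j) = A j j + 1 := div_mul_cancel₀ _ (by linarith)
  simp only [mulVec_add, mulVec_single, op_smul_eq_smul, MulOpposite.op_one, one_smul,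
    dotProduct_add, dotProduct_smul, add_dotProduct, single_dotProduct, col_apply, hii, mul_zero,
    hs.apply i j, one_mul, zero_add, smul_eq_mul] at hx
  linarith

theorem Copositive.diag_mul_inv_mul_apply (hA : Copositive A) (hs : A.IsSymm) {p : ι}
    (hp : ∀ j ≠ p, A p j ≤ 0) (j : ι) : A p p * (A p p)⁻¹ * A p j = A p j := by
  rcases eq_or_ne (A p p) 0 with h | h
  · obtain rfl | hj := eq_or_ne j p
    · simp [h]
    · simp [h, le_antisymm (hp j hj) (hA.nonneg_of_diag_eq_zero hs h j)]
  · rw [mul_inv_cancel₀ h, one_mul]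

theorem Copositive.schurComplementAt_apply_left (hA : Copositive A) (hs : A.IsSymm) {p : ι}
    (hp : ∀ j ≠ p, A p j ≤ 0) (j : ι) : schurComplementAt A p p j = 0 := by
  rw [schurComplementAt_apply, ← mul_assoc, mul_comm _ (A p p), hA.diag_mul_inv_mul_apply hs hp,
    sub_self]

theorem Copositive.schurComplementAt_apply_right (hA : Copositive A) (hs : A.IsSymm) {p : ι}
    (hp : ∀ j ≠ p, A p j ≤ 0) (i : ι) : schurComplementAt A p i p = 0 := by
  rw [schurComplementAt_apply, hs.apply p i, mul_comm (A p i), ← mul_assoc,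
    mul_comm _ (A p p), hA.diag_mul_inv_mul_apply hs hp, sub_self]

theorem Copositive.schurComplementAt (hA : Copositive A) (hs : A.IsSymm) {p : ι}
    (hp : ∀ j ≠ p, A p j ≤ 0) : Copositive (A.schurComplementAt p) := by
  classical
  intro x hx
  set s := ∑ j ∈ Finset.univ.erase p, A p j * x j
  have hs_nonpos : s ≤ 0 := Finset.sum_nonpos fun j hj =>
    mul_nonpos_of_nonpos_of_nonneg (hp j (Finset.ne_of_mem_erase hj)) (hx j)
  set t := -((A p p)⁻¹ * s)
  have hy : ∀ i, 0 ≤ Function.update x p t i := by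
    intro i
    by_cases hi : i = p
    · rw [hi, Function.update_self]
      exact neg_nonneg.2
        (mul_nonpos_of_nonneg_of_nonpos (inv_nonneg.2 (hA.diag_nonneg p)) hs_nonpos)
    · rw [Function.update_of_ne hi]; exact hx i
  have hortho : A p ⬝ᵥ Function.update x p t = 0 := by
    have hrest : ∑ j ∈ Finset.univ.erase p, A p j * Function.update x p t j = s :=
      Finset.sum_congr rfl fun j hj => by rw [Function.update_of_ne (Finset.ne_of_mem_erase hj)]
    have hpivot : A p p * (A p p)⁻¹ * s = s := by
      rw [Finset.mul_sum]
      exact Finset.sum_congr rfl fun j _ => by rw [← mul_assoc, hA.diag_mul_inv_mul_apply hs hp]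
    rw [dotProduct, ← Finset.add_sum_erase _ _ (Finset.mem_univ p), Function.update_self, hrest]
    linear_combination -hpivot
  rw [← dotProduct_mulVec_update_of_apply_eq_zero (hA.schurComplementAt_apply_left hs hp)
    (hA.schurComplementAt_apply_right hs hp) x t, dotProduct_mulVec_schurComplementAt, hortho]
  simpa using hA _ hy

theorem Copositive.submatrix {κ : Type*} [Fintype κ] (hA : Copositive A) (e : κ → ι) :
    Copositive (A.submatrix e e) := by
  classical
  have hsel : (1 : Matrix ι ι ℝ).submatrix e id * A * ((1 : Matrix ι ι ℝ).submatrix e id)ᵀ =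
      A.submatrix e e := by
    ext a b
    simp [mul_apply, one_apply]
  intro x hx
  rw [← hsel, ← mulVec_mulVec, ← mulVec_mulVec, dotProduct_mulVec, mulVec_transpose]
  refine hA _ fun i => ?_
  simp only [vecMul, dotProduct, submatrix_apply, one_apply, id]
  exact Finset.sum_nonneg fun k _ => by split_ifs <;> simp [hx k]

end Copositive

section SPN

variable {ι : Type*} [Fintype ι] {A : Matrix ι ι ℝ}

theorem SPN.posSemidef_add (hA : SPN A) {R : Matrix ι ι ℝ} (hR : R.PosSemidef) : SPN (R + A) := by
  obtain ⟨P, N, hP, hN, rfl⟩ := hA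
  exact ⟨R + P, N, hR.add hP, hN, (add_assoc _ _ _).symm⟩

theorem SPN.of_submatrix {κ : Type*} [Fintype κ] {e : κ → ι} (he : Function.Injective e)
    (hs : A.IsSymm) (hA : SPN (A.submatrix e e)) (hout : ∀ i ∉ Set.range e, ∀ j, 0 ≤ A i j) :
    SPN A := by
  classical
  obtain ⟨P, N, hP, hN, hPN⟩ := hA
  let E := (1 : Matrix ι ι ℝ).submatrix e id
  have hpad (a b : κ) : (Eᵀ * P * E) (e a) (e b) = P a b := by
    simp [E, mul_apply, one_apply, he.eq_iff]
  have hzero (i j : ι) (h : i ∉ Set.range e ∨ j ∉ Set.range e) : (Eᵀ * P * E) i j = 0 := by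
    simp only [Set.mem_range, not_exists] at h
    rcases h with h | h <;> simp [E, mul_apply, one_apply, h, fun x => Ne.symm (h x)]
  refine ⟨Eᵀ * P * E, A - Eᵀ * P * E, hP.conjTranspose_mul_mul_same E, fun i j => ?_,
    (add_sub_cancel _ _).symm⟩
  rw [Matrix.sub_apply, sub_nonneg]
  by_cases hi : i ∈ Set.range e
  · by_cases hj : j ∈ Set.range e
    · obtain ⟨⟨a, rfl⟩, ⟨b, rfl⟩⟩ := And.intro hi hj
      rw [hpad, show A (e a) (e b) = P a b + N a b from congrFun₂ hPN a b]
      exact le_add_of_nonneg_right (hN a b)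
    · rw [hzero i j (Or.inr hj), hs.apply]
      exact hout j hj i
  · rw [hzero i j (Or.inl hi)]
    exact hout i hi j

theorem Copositive.spn_of_spn_schurComplementAt (hA : Copositive A) (hs : A.IsSymm) {p : ι}
    (hp : ∀ j ≠ p, A p j ≤ 0) {κ : Type*} [Fintype κ] {e : κ → ι} (he : Function.Injective e)
    (hrange : ∀ i ∉ Set.range e, i = p) (h : SPN ((A.schurComplementAt p).submatrix e e)) :
    SPN A := by
  have hC : SPN (A.schurComplementAt p) := h.of_submatrix he (hs.schurComplementAt p)
    fun i hi j => by rw [hrange i hi, hA.schurComplementAt_apply_left hs hp]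
  have hR : ((A p p)⁻¹ • vecMulVec (A p) (A p)).PosSemidef :=
    (posSemidef_vecMulVec_self_star (A p)).smul (inv_nonneg.2 (hA.diag_nonneg p))
  simpa [Matrix.schurComplementAt] using hC.posSemidef_add hR

end SPN

section Index

variable {n : ℕ}

-- Condition (I).
def PosEntriesMonotone (M : Matrix (Fin n) (Fin n) ℝ) : Prop :=
  ∀ i j : Fin n, i ≠ j → 0 < M i j →
    (∀ h : (i : ℕ) + 1 < n, M i j ≤ M ⟨(i : ℕ) + 1, h⟩ j) ∧
    (∀ h : (j : ℕ) + 1 < n, M i j ≤ M i ⟨(j : ℕ) + 1, h⟩)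

-- Condition (II) is `RowsMonotoneFrom (posIdx M) M`; `k` is 1-based like `posIdx`.
def RowsMonotoneFrom (k : ℕ) (M : Matrix (Fin n) (Fin n) ℝ) : Prop :=
  ∀ (i j : Fin n) (h : (j : ℕ) + 1 < n), k ≤ (j : ℕ) + 1 → i < j → M i j ≤ M i ⟨(j : ℕ) + 1, h⟩

theorem RowsMonotoneFrom.mono {k k' : ℕ} {M : Matrix (Fin n) (Fin n) ℝ}
    (hM : RowsMonotoneFrom k M) (hk : k ≤ k') : RowsMonotoneFrom k' M :=
  fun i j h hj hij => hM i j h (hk.trans hj) hij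

theorem posIdx_le {M : Matrix (Fin n) (Fin n) ℝ} {i j : Fin n} (hij : i ≠ j) (h : 0 < M i j) :
    posIdx M ≤ i + 1 := by
  rw [posIdx, if_pos ⟨i, j, hij, h⟩]
  exact Nat.sInf_le ⟨i, j, rfl, hij, h⟩

theorem one_le_posIdx (M : Matrix (Fin n) (Fin n) ℝ) : 1 ≤ posIdx M := by
  unfold posIdx
  split_ifs with h
  · obtain ⟨i, j, hij, hpos⟩ := h
    exact le_csInf ⟨_, i, j, rfl, hij, hpos⟩ (by rintro _ ⟨i, j, rfl, -, -⟩; omega)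
  · omega

theorem posIdx_le_add_one (M : Matrix (Fin n) (Fin n) ℝ) : posIdx M ≤ n + 1 := by
  by_cases h : ∃ i j : Fin n, i ≠ j ∧ 0 < M i j
  · obtain ⟨i, j, hij, hpos⟩ := h
    exact (posIdx_le hij hpos).trans (by omega)
  · rw [posIdx, if_neg h]

theorem posIdx_le_posIdx_add_one {A : Matrix (Fin (n + 1)) (Fin (n + 1)) ℝ}
    {B : Matrix (Fin n) (Fin n) ℝ} (h : ∀ i j, B i j ≤ A i.succ j.succ) :
    posIdx A ≤ posIdx B + 1 := by
  by_cases hB : ∃ i j : Fin n, i ≠ j ∧ 0 < B i j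
  · obtain ⟨i, j, hi, hij, hpos⟩ :=
      Nat.sInf_mem (s := {m : ℕ | ∃ i j : Fin n, (i : ℕ) + 1 = m ∧ i ≠ j ∧ 0 < B i j})
        (by obtain ⟨i, j, hij, hpos⟩ := hB; exact ⟨_, i, j, rfl, hij, hpos⟩)
    rw [show posIdx B = i + 1 by rw [posIdx, if_pos hB, hi]]
    exact posIdx_le (Fin.succ_injective _ |>.ne hij) (hpos.trans_le (h i j))
  · rw [show posIdx B = n + 1 by rw [posIdx, if_neg hB]]
    exact posIdx_le_add_one A

theorem PosEntriesMonotone.pos_of_le_right {M : Matrix (Fin n) (Fin n) ℝ}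
    (hM : PosEntriesMonotone M) {i j : Fin n} (hij : i < j) (h : 0 < M i j) (j' : Fin n)
    (hjj' : j ≤ j') : 0 < M i j' := by
  suffices ∀ m, (j : ℕ) ≤ m → ∀ hm : m < n, 0 < M i ⟨m, hm⟩ from this j' hjj' j'.isLt
  refine Nat.le_induction (fun _ => h) fun m hjm ih hm => ?_
  have hpos := ih (by omega)
  exact hpos.trans_le ((hM i _ (Fin.ne_of_lt (hij.trans_le hjm)) hpos).2 hm)

theorem PosEntriesMonotone.pos_of_le_down {M : Matrix (Fin n) (Fin n) ℝ}
    (hM : PosEntriesMonotone M) {i j : Fin n} (h : 0 < M i j) (i' : Fin n)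
    (hii' : i ≤ i') (hi'j : i' < j) : 0 < M i' j := by
  suffices ∀ m, (i : ℕ) ≤ m → ∀ hm : m < j, 0 < M ⟨m, hm.trans j.isLt⟩ j from this i' hii' hi'j
  refine Nat.le_induction (fun _ => h) fun m him ih hm => ?_
  have hpos := ih (by omega)
  exact hpos.trans_le ((hM _ j (Fin.ne_of_lt (Fin.mk_lt_of_lt_val (by omega))) hpos).1
    (by rw [Fin.val_mk]; omega))

theorem PosEntriesMonotone.pos_last {M : Matrix (Fin (n + 1)) (Fin (n + 1)) ℝ}
    (hM : PosEntriesMonotone M) {j : Fin (n + 1)} (hj : j ≠ 0) (h : 0 < M 0 j) (i : Fin n) :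
    0 < M i.castSucc (Fin.last n) :=
  hM.pos_of_le_down (hM.pos_of_le_right (Fin.pos_iff_ne_zero.2 hj) h _ (Fin.le_last j)) _
    (Fin.zero_le _) (Fin.castSucc_lt_last i)

theorem PosEntriesMonotone.submatrix_castSucc {M : Matrix (Fin (n + 1)) (Fin (n + 1)) ℝ}
    (hM : PosEntriesMonotone M) : PosEntriesMonotone (M.submatrix Fin.castSucc Fin.castSucc) :=
  fun i j hij h => have hM := hM _ _ (Fin.castSucc_injective _ |>.ne hij) h
    ⟨fun hi => hM.1 (by simp only [Fin.val_castSucc]; omega),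
      fun hj => hM.2 (by simp only [Fin.val_castSucc]; omega)⟩

theorem RowsMonotoneFrom.submatrix_castSucc {k : ℕ} {M : Matrix (Fin (n + 1)) (Fin (n + 1)) ℝ}
    (hM : RowsMonotoneFrom k M) : RowsMonotoneFrom k (M.submatrix Fin.castSucc Fin.castSucc) :=
  fun i j h hj hij =>
    hM _ _ (by simp only [Fin.val_castSucc]; omega) hj (Fin.castSucc_lt_castSucc_iff.2 hij)

theorem SPN.of_submatrix_castSucc {M : Matrix (Fin (n + 1)) (Fin (n + 1)) ℝ} (hs : M.IsSymm)
    (hlast : ∀ i, 0 ≤ M i (Fin.last n)) (h : SPN (M.submatrix Fin.castSucc Fin.castSucc)) :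
    SPN M := by
  refine h.of_submatrix (Fin.castSucc_injective n) hs fun i hi j => ?_
  obtain rfl : i = Fin.last n := Fin.ext (by
    simp only [Fin.range_castSucc, Set.mem_ofPred_eq, not_lt] at hi; rw [Fin.val_last]; omega)
  rw [hs.apply]
  exact hlast j

end Index

section FirstRow

variable {n : ℕ} {M : Matrix (Fin (n + 1)) (Fin (n + 1)) ℝ}

theorem RowsMonotoneFrom.zero_succ_le {k : ℕ} (hM : RowsMonotoneFrom k M) {a : Fin n}
    (h : (a : ℕ) + 1 < n) (hk : k ≤ a + 2) : M 0 a.succ ≤ M 0 (⟨a + 1, h⟩ : Fin n).succ :=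
  hM 0 a.succ (by simpa using h) hk (Fin.succ_pos a)

theorem PosEntriesMonotone.schurComplementAt_zero (hs : M.IsSymm) (hI : PosEntriesMonotone M)
    (hII : RowsMonotoneFrom (posIdx M) M) (h00 : 0 ≤ M 0 0) (hrow : ∀ j ≠ 0, M 0 j ≤ 0) :
    PosEntriesMonotone ((M.schurComplementAt 0).submatrix Fin.succ Fin.succ) := by
  intro i j hij hpos
  have hne : i.succ ≠ j.succ := (Fin.succ_injective n).ne hij
  have hMpos : 0 < M i.succ j.succ := hpos.trans_le (schurComplementAt_apply_le h00
    (mul_nonneg_of_nonpos_of_nonpos (hrow _ i.succ_ne_zero) (hrow _ j.succ_ne_zero)))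
  have hki : posIdx M ≤ i + 2 := posIdx_le hne hMpos
  have hkj : posIdx M ≤ j + 2 := posIdx_le hne.symm (by rwa [hs.apply])
  refine ⟨fun h => ?_, fun h => ?_⟩
  · exact schurComplementAt_apply_le_apply h00 ((hI _ _ hne hMpos).1 (by simpa using h))
      (mul_le_mul_of_nonpos_right (hII.zero_succ_le h hki) (hrow _ j.succ_ne_zero))
  · exact schurComplementAt_apply_le_apply h00 ((hI _ _ hne hMpos).2 (by simpa using h))
      (mul_le_mul_of_nonpos_left (hII.zero_succ_le h hkj) (hrow _ i.succ_ne_zero))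

theorem RowsMonotoneFrom.schurComplementAt_zero (hII : RowsMonotoneFrom (posIdx M) M)
    (h00 : 0 ≤ M 0 0) (hrow : ∀ j ≠ 0, M 0 j ≤ 0) :
    RowsMonotoneFrom (posIdx ((M.schurComplementAt 0).submatrix Fin.succ Fin.succ))
      ((M.schurComplementAt 0).submatrix Fin.succ Fin.succ) := by
  intro i j h hj hij
  have hk : posIdx M ≤ j + 2 :=
    (posIdx_le_posIdx_add_one (B := (M.schurComplementAt 0).submatrix Fin.succ Fin.succ)
      fun i j => schurComplementAt_apply_le h00
        (mul_nonneg_of_nonpos_of_nonpos (hrow _ i.succ_ne_zero) (hrow _ j.succ_ne_zero))).trans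
      (by omega)
  exact schurComplementAt_apply_le_apply h00
    (hII i.succ j.succ (by simpa using h) hk (Fin.succ_lt_succ_iff.2 hij))
    (mul_le_mul_of_nonpos_left (hII.zero_succ_le h hk) (hrow _ i.succ_ne_zero))

end FirstRow

theorem Copositive.spn_of_posEntriesMonotone {n : ℕ} (M : Matrix (Fin n) (Fin n) ℝ)
    (hs : M.IsSymm) (hI : PosEntriesMonotone M) (hII : RowsMonotoneFrom (posIdx M) M)
    (hA : Copositive M) : SPN M := by
  induction n with
  | zero => exact ⟨0, M, .zero, fun i => i.elim0, (zero_add M).symm⟩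
  | succ n ih =>
    by_cases hrow : ∀ j ≠ 0, M 0 j ≤ 0
    · have h00 := hA.diag_nonneg 0
      exact hA.spn_of_spn_schurComplementAt hs hrow (Fin.succ_injective n)
        (fun i hi => by simpa using hi)
        (ih _ ((hs.schurComplementAt 0).submatrix _) (hI.schurComplementAt_zero hs hII h00 hrow)
          (hII.schurComplementAt_zero h00 hrow) ((hA.schurComplementAt hs hrow).submatrix _))
    · push Not at hrow
      obtain ⟨j, hj, hpos⟩ := hrow
      have hk : posIdx M ≤ 1 := by simpa using posIdx_le hj.symm hpos
      have hlast : ∀ i, 0 ≤ M i (Fin.last n) :=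
        Fin.lastCases (hA.diag_nonneg _) fun i => (hI.pos_last hj hpos i).le
      exact SPN.of_submatrix_castSucc hs hlast
        (ih _ (hs.submatrix _) hI.submatrix_castSucc
          ((hII.mono (hk.trans (one_le_posIdx _))).submatrix_castSucc) (hA.submatrix _))

theorem stmt_12 {n : ℕ} (M : Matrix (Fin n) (Fin n) ℝ) (hM : M.IsSymm)
    (hI : ∀ i j : Fin n, i ≠ j → 0 < M i j →
      (∀ h : (i : ℕ) + 1 < n, M i j ≤ M ⟨(i : ℕ) + 1, h⟩ j) ∧
      (∀ h : (j : ℕ) + 1 < n, M i j ≤ M i ⟨(j : ℕ) + 1, h⟩))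
    (hII : ∀ (i j : Fin n) (h : (j : ℕ) + 1 < n), (i : ℕ) + 1 < n →
      posIdx M ≤ (j : ℕ) + 1 → (i : ℕ) < (j : ℕ) →
      M i j ≤ M i ⟨(j : ℕ) + 1, h⟩)
    (hcop : Copositive M) :
    SPN M :=
  hcop.spn_of_posEntriesMonotone M hM hI
    fun i j h hk hij => hII i j h ((Nat.succ_lt_succ hij).trans h) hk hij
end
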